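/- arXiv:1409.6751 — 11 statements merged into one kernel-verified Lean document; each statement's English description precedes it below -/
import Mathlib

section
/- Let R be a unital star-ring with elements D, γ, J and signs ε, ε′, ε″ ∈ {1, −1} satisfying J*·J = J·J* = 1, J·J = ε·1, J·D = ε′·D·J and J·γ = ε″·γ·J. Let u ∈ R be unitary (u·u* = u*·u = 1) with γ·u = u·γ, and suppose the commutant property [x, J·y*·J*] = 0 and the first-order condition [[D, x], J·y*·J*] = 0 hold for all x, y ∈ {u, u*}. Put U := u·J·u·J* and A := u·D·u* − D (the inner fluctuation A = u·[D, u*]). Then U·γ·U* = γ, U·J·U* = J, and U·D·U* = D + A + ε′·J·A·J*; that is, the real, even spectral triples with Dirac operators D and D + A + ε′·J·A·J* are unitarily equivalent via U = uJuJ*. -/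
private lemma sign_cent {R : Type*} [Ring R] {e : R} (he : e = 1 ∨ e = -1) :
    ∀ x y : R, x * (e * y) = e * (x * y) := by
  rcases he with rfl | rfl <;> intro x y <;> simp

private lemma sign_sq {R : Type*} [Ring R] {e : R} (he : e = 1 ∨ e = -1) :
    ∀ x : R, e * (e * x) = x := by
  rcases he with rfl | rfl <;> intro x <;> simp

private lemma sign_comm {R : Type*} [Ring R] {e : R} (he : e = 1 ∨ e = -1) :
    ∀ x : R, x * e = e * x := by
  rcases he with rfl | rfl <;> intro x <;> simp

/-- **Unitary equivalence of real even spectral triples via inner fluctuations.**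
`R` is a unital star-ring (bounded operators on the Hilbert space), `D` the Dirac
operator, `γ` the grading, `J` the real structure with signs `ε, ε', ε''`, and `u`
a unitary commuting with `γ`, satisfying the commutant property and the first-order
condition.  With `U = uJuJ*` and `A = u[D,u*]`, conjugation by `U` fixes `γ` and `J`
and sends `D` to `D + A + ε'·J·A·J*`. -/
theorem unitary_equivalence_inner_fluctuations
    {R : Type*} [Ring R] [StarRing R]
    (D γ J u A U ε ε' ε'' : R)
    (hε : ε = 1 ∨ ε = -1) (hε' : ε' = 1 ∨ ε' = -1) (hε'' : ε'' = 1 ∨ ε'' = -1)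
    (hJstarJ : star J * J = 1) (hJJstar : J * star J = 1)
    (hJJ : J * J = ε * 1)
    (hJD : J * D = ε' * (D * J))
    (hJγ : J * γ = ε'' * (γ * J))
    (huustar : u * star u = 1) (hustaru : star u * u = 1)
    (hγu : γ * u = u * γ)
    (hcomm : ∀ x ∈ ({u, star u} : Set R), ∀ y ∈ ({u, star u} : Set R),
      x * (J * star y * star J) - (J * star y * star J) * x = 0)
    (horder : ∀ x ∈ ({u, star u} : Set R), ∀ y ∈ ({u, star u} : Set R),
      (D * x - x * D) * (J * star y * star J)
        - (J * star y * star J) * (D * x - x * D) = 0)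
    (hU : U = u * J * u * star J)
    (hA : A = u * D * star u - D) :
    U * γ * star U = γ ∧ U * J * star U = J ∧
      U * D * star U = D + A + ε' * (J * A * star J) := by
  have centε := sign_cent hε
  have sqε := sign_sq hε
  have commε := sign_comm hε
  have centε' := sign_cent hε'
  have sqε' := sign_sq hε'
  have centε'' := sign_cent hε''
  have sqε'' := sign_sq hε''
  -- trailing-variable forms of the basic relations
  have t1 : ∀ x : R, u * (star u * x) = x := fun x => by
    rw [← mul_assoc, huustar, one_mul]
  have t2 : ∀ x : R, star u * (u * x) = x := fun x => by
    rw [← mul_assoc, hustaru, one_mul]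
  have t3 : ∀ x : R, star J * (J * x) = x := fun x => by
    rw [← mul_assoc, hJstarJ, one_mul]
  have t4 : ∀ x : R, J * (star J * x) = x := fun x => by
    rw [← mul_assoc, hJJstar, one_mul]
  have hJJ' : J * J = ε := by rw [hJJ, mul_one]
  have t5 : ∀ x : R, J * (J * x) = ε * x := fun x => by rw [← mul_assoc, hJJ']
  -- star J = ε * J
  have hJs : star J = ε * J := by
    have h := t3 J
    rw [hJJ'] at h
    rw [commε] at h
    calc star J = ε * (ε * star J) := (sqε _).symm
      _ = ε * J := by rw [h]
  -- moving D and γ across J and star J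
  have hDJ : D * J = ε' * (J * D) := by
    have h : ε' * (J * D) = D * J := by rw [hJD, sqε']
    exact h.symm
  have hγJ : γ * J = ε'' * (J * γ) := by
    have h : ε'' * (J * γ) = γ * J := by rw [hJγ, sqε'']
    exact h.symm
  have hKD : star J * D = ε' * (D * star J) := by
    calc star J * D = star J * D * (J * star J) := by rw [hJJstar, mul_one]
      _ = star J * (D * J) * star J := by simp only [mul_assoc]
      _ = star J * (ε' * (J * D)) * star J := by rw [hDJ]
      _ = (ε' * (star J * (J * D))) * star J := by rw [centε']
      _ = ε' * (star J * (J * (D * star J))) := by simp only [mul_assoc]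
      _ = ε' * (D * star J) := by rw [t3]
  have hKγ : star J * γ = ε'' * (γ * star J) := by
    calc star J * γ = star J * γ * (J * star J) := by rw [hJJstar, mul_one]
      _ = star J * (γ * J) * star J := by simp only [mul_assoc]
      _ = star J * (ε'' * (J * γ)) * star J := by rw [hγJ]
      _ = (ε'' * (star J * (J * γ))) * star J := by rw [centε'']
      _ = ε'' * (star J * (J * (γ * star J))) := by simp only [mul_assoc]
      _ = ε'' * (γ * star J) := by rw [t3]
  have t6 : ∀ x : R, star J * (D * x) = ε' * (D * (star J * x)) := fun x => by
    rw [← mul_assoc, hKD, mul_assoc, mul_assoc]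
  have t7 : ∀ x : R, J * (D * x) = ε' * (D * (J * x)) := fun x => by
    rw [← mul_assoc, hJD, mul_assoc, mul_assoc]
  have t8 : ∀ x : R, star J * (γ * x) = ε'' * (γ * (star J * x)) := fun x => by
    rw [← mul_assoc, hKγ, mul_assoc, mul_assoc]
  have t9 : ∀ x : R, J * (γ * x) = ε'' * (γ * (J * x)) := fun x => by
    rw [← mul_assoc, hJγ, mul_assoc, mul_assoc]
  have t10 : ∀ x : R, u * (γ * x) = γ * (u * x) := fun x => by
    rw [← mul_assoc, ← hγu, mul_assoc]
  -- memberships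
  have memu : u ∈ ({u, star u} : Set R) := Set.mem_insert _ _
  have mems : star u ∈ ({u, star u} : Set R) := Set.mem_insert_of_mem _ rfl
  -- commutant facts
  have c_uu' : u * (J * u * star J) = J * u * star J * u := by
    have h := hcomm u memu (star u) mems
    rw [star_star] at h
    exact sub_eq_zero.mp h
  have c_us' : u * (J * star u * star J) = J * star u * star J * u :=
    sub_eq_zero.mp (hcomm u memu u memu)
  have c_su' : star u * (J * u * star J) = J * u * star J * star u := by
    have h := hcomm (star u) mems (star u) mems
    rw [star_star] at h
    exact sub_eq_zero.mp h
  have c_ss' : star u * (J * star u * star J) = J * star u * star J * star u :=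
    sub_eq_zero.mp (hcomm (star u) mems u memu)
  have f_u' : (D * u - u * D) * (J * u * star J)
      = J * u * star J * (D * u - u * D) := by
    have h := horder u memu (star u) mems
    rw [star_star] at h
    exact sub_eq_zero.mp h
  -- trailing-variable forms of the commutant facts
  have uv_t : ∀ x : R, u * (J * (u * (star J * x))) = J * (u * (star J * (u * x))) :=
    fun x => by simpa only [mul_assoc] using congrArg (· * x) c_uu'
  have vs_t : ∀ x : R, J * (u * (star J * (star u * x)))
      = star u * (J * (u * (star J * x))) :=
    fun x => by simpa only [mul_assoc] using congrArg (· * x) c_su'.symm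
  have v's_b : J * (star u * (star J * star u)) = star u * (J * (star u * star J)) := by
    simpa only [mul_assoc] using c_ss'.symm
  have f_t : ∀ x : R, J * (u * (star J * ((D * u - u * D) * x)))
      = (D * u - u * D) * (J * (u * (star J * x))) :=
    fun x => by simpa only [mul_assoc] using congrArg (· * x) f_u'.symm
  -- star U
  have hUstar : star U = J * (star u * (star J * star u)) := by
    rw [hU]; simp only [star_mul, star_star, mul_assoc]
  -- A facts
  have hud : u * D * star u = D + A := by rw [hA]; abel
  have hA2 : A = -((D * u - u * D) * star u) := by
    rw [hA, sub_mul, mul_assoc D u (star u), huustar, mul_one, neg_sub]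
  have hJDK : J * D * star J = ε' * D := by
    calc J * D * star J = (ε' * (D * J)) * star J := by rw [hJD]
      _ = ε' * (D * (J * star J)) := by simp only [mul_assoc]
      _ = ε' * D := by rw [hJJstar, mul_one]
  refine ⟨?_, ?_, ?_⟩
  · -- U γ U* = γ
    rw [hUstar, hU]
    simp only [mul_assoc]
    rw [t8, t3, centε'', centε'', centε'', t10, t1, t9, t4, centε'', t10,
      huustar, mul_one, sqε'']
  · -- U J U* = J
    rw [hUstar, hU]
    simp only [mul_assoc]
    rw [t3, v's_b, t1, t5, centε, t1, hJs, sqε]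
  · -- U D U* = D + A + ε' J A J*
    have key : U * D * star U
        = ε' * (u * (J * (u * (D * (star u * (star J * star u)))))) := by
      rw [hUstar, hU]
      simp only [mul_assoc]
      rw [t6, t3, centε', centε', centε']
    have e1 : J * (u * D * star u) * star J
        = ε' * ((J * u * star J) * D * (J * star u * star J)) := by
      simp only [mul_assoc]
      rw [t6, t3, centε', centε', sqε']
    have I1 : J * A * star J
        = ε' * ((J * u * star J) * D * (J * star u * star J) - D) := by
      rw [hA, mul_sub, sub_mul, e1, hJDK, mul_sub]
    have I2 : (J * u * star J) * A * (J * star u * star J) = A := by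
      rw [hA2, mul_neg, neg_mul, neg_inj]
      simp only [mul_assoc]
      rw [f_t, vs_t, t3, t1, hJJstar, mul_one]
    have p1 : u * ((J * u * star J) * D * (J * star u * star J)) * star u
        = (J * u * star J) * (u * D * star u) * (J * star u * star J) := by
      simp only [mul_assoc]
      rw [uv_t, v's_b]
    have I4 : u * ((J * u * star J) * D * (J * star u * star J) - D) * star u
        = (J * u * star J) * D * (J * star u * star J) - D := by
      rw [mul_sub, sub_mul, p1, hud, mul_add, add_mul, I2]
      abel
    have I5 : u * (J * A * star J) * star u = J * A * star J := by
      rw [I1, centε', mul_assoc, I4]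
    calc U * D * star U
        = ε' * (u * (J * (u * (D * (star u * (star J * star u)))))) := key
      _ = ε' * (u * (J * (u * D * star u) * star J) * star u) := by
          simp only [mul_assoc]
      _ = ε' * (u * (J * (D + A) * star J) * star u) := by rw [hud]
      _ = ε' * (u * (J * D * star J + J * A * star J) * star u) := by
          rw [mul_add, add_mul]
      _ = ε' * (u * (ε' * D + J * A * star J) * star u) := by rw [hJDK]
      _ = ε' * (u * (ε' * D) * star u + u * (J * A * star J) * star u) := by
          rw [mul_add, add_mul]
      _ = ε' * (ε' * (u * D * star u) + J * A * star J) := by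
          rw [I5, centε' u D, mul_assoc ε' (u * D) (star u)]
      _ = ε' * (ε' * (D + A) + J * A * star J) := by rw [hud]
      _ = ε' * (ε' * (D + A)) + ε' * (J * A * star J) := by rw [mul_add]
      _ = D + A + ε' * (J * A * star J) := by rw [sqε']
end

section
/- Let a, b be positive integers with a dividing b. Then the group G_{a,b} = {(λ, μ) ∈ U(1) × U(1) : λ^a·μ^(3b) = 1} is isomorphic, as a group, to ℤ_a × U(1). (Indeed, the sequence 1 → U(1) → G_{a,b} → ℤ_a → 1 with maps λ ↦ (λ^(3b/a), λ⁻¹) and (λ, μ) ↦ λ·μ^(3b/a) is split exact.) -/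
/-- The subgroup `G_{a,b} = {(λ, μ) ∈ U(1) × U(1) : λ^a · μ^(3b) = 1}`. -/
noncomputable def Gab (a b : ℕ) : Subgroup (Circle × Circle) where
  carrier := {p | p.1 ^ a * p.2 ^ (3 * b) = 1}
  one_mem' := by simp
  mul_mem' := by
    intro p q hp hq
    simp only [Set.mem_setOf_eq, Prod.fst_mul, Prod.snd_mul, mul_pow] at *
    rw [mul_mul_mul_comm, hp, hq, one_mul]
  inv_mem' := by
    intro p hp
    simp only [Set.mem_setOf_eq, Prod.fst_inv, Prod.snd_inv, inv_pow] at *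
    rw [← mul_inv, hp, inv_one]

/-!
Write `3b = c a`. The shear `(λ, μ) ↦ (λ μ^c, μ)` is an automorphism of `U(1) × U(1)` that turns
the relation `λ^a μ^(c a) = 1` into `(λ μ^c)^a = 1` and leaves `μ` free, so it maps `G_{a,b}`
onto `T × U(1)`, where `T` is the group of `a`-th roots of unity in `U(1)`; and `T ≅ ℤ_a`
via `j ↦ exp(2πij/a)`.
-/

noncomputable def kerCoprodPowMulEquiv {G : Type*} [CommGroup G] (a c : ℕ) :
    ((powMonoidHom a).coprod (powMonoidHom (c * a)) : G × G →* G).ker ≃* rootsOfUnity a G × G where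
  toFun p := (⟨toUnits (p.1.1 * p.1.2 ^ c), by
      rw [mem_rootsOfUnity', val_toUnits_apply, mul_pow, ← pow_mul]
      exact p.2⟩, p.1.2)
  invFun q := ⟨((q.1 : Gˣ) * (q.2 ^ c)⁻¹, q.2), by
      rw [MonoidHom.mem_ker, MonoidHom.coprod_apply, powMonoidHom_apply, powMonoidHom_apply,
        pow_mul, ← mul_pow, inv_mul_cancel_right]
      exact (mem_rootsOfUnity' a _).mp q.1.2⟩
  left_inv p := by ext <;> simp
  right_inv q := by ext <;> simp
  map_mul' p q := by ext <;> simp [mul_pow, mul_mul_mul_comm]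

noncomputable def rootsOfUnityCircleMulEquivZMod (n : ℕ) [NeZero n] :
    rootsOfUnity n Circle ≃* Multiplicative (ZMod n) :=
  (MulEquiv.ofBijective (ZMod.rootsOfUnityAddChar n).toMonoidHom
    (by exact bijective_rootsOfUnityAddChar n)).symm

theorem Gab_eq_ker_coprod_pow (a b : ℕ) :
    Gab a b = ((powMonoidHom a).coprod (powMonoidHom (3 * b)) : Circle × Circle →* Circle).ker :=
  rfl

theorem Gab_mulEquiv_zmod_prod_circle_general (a b : ℕ) (ha : 0 < a)
    (hab : a ∣ b) :
    Nonempty (Gab a b ≃* Multiplicative (ZMod a) × Circle) := by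
  obtain ⟨k, rfl⟩ := hab
  have : NeZero a := ⟨ha.ne'⟩
  have hGab : Gab a (a * k) = ((powMonoidHom a).coprod (powMonoidHom (3 * k * a))).ker := by
    rw [Gab_eq_ker_coprod_pow, mul_left_comm, mul_comm a]
  exact ⟨(MulEquiv.subgroupCongr hGab).trans <| (kerCoprodPowMulEquiv a (3 * k)).trans <|
    (rootsOfUnityCircleMulEquivZMod a).prodCongr (MulEquiv.refl Circle)⟩

/-- **`G_{a,b}` is isomorphic to `ℤ_a × U(1)`.**
For positive integers `a ∣ b`, the group
`G_{a,b} = {(λ, μ) ∈ U(1) × U(1) : λ^a μ^(3b) = 1}` is isomorphic, as a group,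
to `ℤ_a × U(1)`. -/
theorem Gab_mulEquiv_zmod_prod_circle (a b : ℕ) (ha : 0 < a) (hb : 0 < b)
    (hab : a ∣ b) :
    Nonempty (Gab a b ≃* Multiplicative (ZMod a) × Circle) :=
  Gab_mulEquiv_zmod_prod_circle_general a b ha hab
end

section
/- Let a, b be positive integers. The map Φ((λ, μ), q, s) := (λ, q, μ·s) defines a group homomorphism Φ : G_{a,b} × SU(2) × SU(3) → U(1) × SU(2) × U(3) whose image is exactly the subgroup H_{a,b} and whose kernel is {((1, ζ), 1, ζ⁻¹·1₃) : ζ ∈ U(1), ζ³ = 1}, a cyclic group of order 3. -/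
/-- `SU(n)`: the special unitary group of `n × n` complex matrices, as a group. -/
noncomputable instance SUn.instGroup (n : Type*) [DecidableEq n] [Fintype n] :
    Group (Matrix.specialUnitaryGroup n ℂ) :=
  { (inferInstance : Monoid (Matrix.specialUnitaryGroup n ℂ)) with
    inv := fun A => ⟨star A.1, by
      obtain ⟨h1, h2⟩ := Matrix.mem_specialUnitaryGroup_iff.mp A.2
      refine Matrix.mem_specialUnitaryGroup_iff.mpr ⟨Unitary.star_mem h1, ?_⟩
      rw [Matrix.star_eq_conjTranspose, Matrix.det_conjTranspose, h2, star_one]⟩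
    inv_mul_cancel := fun A =>
      Subtype.ext ((Matrix.mem_specialUnitaryGroup_iff.mp A.2).1.1) }

noncomputable abbrev SU2 : Type := Matrix.specialUnitaryGroup (Fin 2) ℂ
noncomputable abbrev SU3 : Type := Matrix.specialUnitaryGroup (Fin 3) ℂ
noncomputable abbrev U3 : Type := Matrix.unitaryGroup (Fin 3) ℂ

/-- Multiplication `μ·s` of a special unitary `3×3` matrix `s` by a scalar
`μ ∈ U(1)`, landing in `U(3)`. -/
noncomputable def circleSMul (μ : Circle) (s : SU3) : U3 :=
  ⟨(μ : ℂ) • (s : Matrix (Fin 3) (Fin 3) ℂ), by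
    rw [Matrix.mem_unitaryGroup_iff]
    have hs : (s : Matrix (Fin 3) (Fin 3) ℂ) * star (s : Matrix (Fin 3) (Fin 3) ℂ) = 1 :=
      (Matrix.mem_specialUnitaryGroup_iff.mp s.2).1.2
    rw [star_smul, smul_mul_smul_comm, hs]
    have h1 : (μ : ℂ) * star (μ : ℂ) = 1 := by
      rw [Complex.star_def, Complex.mul_conj, Circle.normSq_coe, Complex.ofReal_one]
    rw [h1, one_smul]⟩

/-- The map `Φ((λ, μ), q, s) = (λ, q, μ·s)` as a group homomorphism
`G_{a,b} × SU(2) × SU(3) →* U(1) × SU(2) × U(3)`. -/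
noncomputable def Phi (a b : ℕ) : Gab a b × SU2 × SU3 →* Circle × SU2 × U3 where
  toFun x := ((x.1 : Circle × Circle).1, x.2.1,
    circleSMul (x.1 : Circle × Circle).2 x.2.2)
  map_one' := by
    refine Prod.ext rfl (Prod.ext rfl ?_)
    apply Subtype.ext
    simp [circleSMul]
  map_mul' x y := by
    refine Prod.ext rfl (Prod.ext rfl ?_)
    refine Subtype.ext ?_
    show ((((x.1 : Circle × Circle).2 * (y.1 : Circle × Circle).2 : Circle) : ℂ)) •
        ((x.2.2 : Matrix (Fin 3) (Fin 3) ℂ) * (y.2.2 : Matrix (Fin 3) (Fin 3) ℂ)) =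
      (((x.1 : Circle × Circle).2 : ℂ) • (x.2.2 : Matrix (Fin 3) (Fin 3) ℂ)) *
        (((y.1 : Circle × Circle).2 : ℂ) • (y.2.2 : Matrix (Fin 3) (Fin 3) ℂ))
    rw [Circle.coe_mul, smul_mul_smul_comm]

/-- The subgroup `H_{a,b} = {(λ, q, m) ∈ U(1) × SU(2) × U(3) : λ^a (det m)^b = 1}`,
realized as the kernel of `(λ, q, m) ↦ λ^a (det m)^b`. -/
noncomputable def detPow (a b : ℕ) : Circle × SU2 × U3 →* ℂ where
  toFun x := (x.1 : ℂ) ^ a * ((x.2.2 : Matrix (Fin 3) (Fin 3) ℂ).det) ^ b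
  map_one' := by simp
  map_mul' x y := by
    simp only [Prod.fst_mul, Prod.snd_mul, Circle.coe_mul, Submonoid.coe_mul,
      Matrix.det_mul, mul_pow]
    ring

noncomputable def Hab (a b : ℕ) : Subgroup (Circle × SU2 × U3) := (detPow a b).ker

/-!
Taking determinants, `det (μ·s) = μ³`, so the relation `λ^a μ^{3b} = 1` defining `G_{a,b}` turns
into the relation `λ^a (det m)^b = 1` defining `H_{a,b}`. Conversely, since `U(1)` is divisible,
`det m` has a cube root `μ ∈ U(1)`, and then `m = μ·(μ⁻¹m)` with `μ⁻¹m ∈ SU(3)`. In the kernel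
`λ = 1`, `q = 1` and `s = μ⁻¹·1₃`, so `det s = 1` forces `μ³ = 1`; the coordinate `μ` therefore
identifies the kernel with the cube roots of unity.
-/

open Matrix

lemma Circle.exists_pow_eq (z : Circle) {n : ℕ} (hn : n ≠ 0) : ∃ w : Circle, w ^ n = z := by
  obtain ⟨w, hw⟩ := IsAlgClosed.exists_pow_nat_eq (z : ℂ) (Nat.pos_of_ne_zero hn)
  have hw1 : ‖w‖ = 1 := by
    rw [← pow_left_inj₀ (norm_nonneg w) zero_le_one hn, ← norm_pow, hw, one_pow, Circle.norm_coe]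
  exact ⟨⟨w, mem_sphere_zero_iff_norm.2 hw1⟩, Circle.ext hw⟩

lemma Circle.coe_mem_unitary (z : Circle) : (z : ℂ) ∈ unitary ℂ := by
  rw [Unitary.mem_iff, Complex.star_def, Complex.conj_mul', Complex.mul_conj', Circle.norm_coe]
  norm_num

lemma Matrix.circle_smul_mem_specialUnitaryGroup {n : Type*} [Fintype n] [DecidableEq n]
    (μ : Circle) {A : Matrix n n ℂ} (hA : A ∈ unitaryGroup n ℂ)
    (hdet : (μ : ℂ) ^ Fintype.card n * A.det = 1) :
    (μ : ℂ) • A ∈ specialUnitaryGroup n ℂ :=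
  mem_specialUnitaryGroup_iff.mpr
    ⟨Unitary.smul_mem_of_mem μ.coe_mem_unitary hA, by rw [det_smul, hdet]⟩

section Phi

variable {a b : ℕ}

lemma mem_Gab_iff {p : Circle × Circle} : p ∈ Gab a b ↔ p.1 ^ a * p.2 ^ (3 * b) = 1 := Iff.rfl

lemma mem_Hab_iff {y : Circle × SU2 × U3} :
    y ∈ Hab a b ↔ (y.1 : ℂ) ^ a * (y.2.2 : Matrix (Fin 3) (Fin 3) ℂ).det ^ b = 1 := Iff.rfl

lemma coe_circleSMul (μ : Circle) (s : SU3) :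
    (circleSMul μ s : Matrix (Fin 3) (Fin 3) ℂ) = (μ : ℂ) • (s : Matrix (Fin 3) (Fin 3) ℂ) := rfl

lemma det_circleSMul (μ : Circle) (s : SU3) :
    (circleSMul μ s : Matrix (Fin 3) (Fin 3) ℂ).det = (μ : ℂ) ^ 3 := by
  rw [coe_circleSMul, det_smul, Fintype.card_fin, (mem_specialUnitaryGroup_iff.mp s.2).2, mul_one]

lemma circleSMul_eq_one_iff (μ : Circle) (s : SU3) :
    circleSMul μ s = 1 ↔
      μ ^ 3 = 1 ∧ (s : Matrix (Fin 3) (Fin 3) ℂ) = ((μ⁻¹ : Circle) : ℂ) • 1 := by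
  rw [Subtype.ext_iff, coe_circleSMul, Submonoid.coe_one, Circle.coe_inv, ← Circle.coe_eq_one,
    Circle.coe_pow]
  refine ⟨fun h => ⟨?_, ?_⟩, fun ⟨_, hs⟩ => ?_⟩
  · simpa [det_smul, (mem_specialUnitaryGroup_iff.mp s.2).2] using congrArg det h
  · rw [← h, smul_smul, inv_mul_cancel₀ μ.coe_ne_zero, one_smul]
  · rw [hs, smul_smul, mul_inv_cancel₀ μ.coe_ne_zero, one_smul]

lemma Phi_apply (x : Gab a b × SU2 × SU3) :
    Phi a b x = ((x.1 : Circle × Circle).1, x.2.1, circleSMul (x.1 : Circle × Circle).2 x.2.2) :=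
  rfl

lemma Phi_range_le_Hab : (Phi a b).range ≤ Hab a b := by
  rintro _ ⟨⟨⟨⟨l, μ⟩, hg⟩, q, s⟩, rfl⟩
  rw [mem_Hab_iff, Phi_apply, det_circleSMul, ← pow_mul]
  exact_mod_cast congrArg ((↑) : Circle → ℂ) (mem_Gab_iff.mp hg)

lemma Hab_le_Phi_range : Hab a b ≤ (Phi a b).range := by
  rintro ⟨l, q, m⟩ hy
  have hdet : (m : Matrix (Fin 3) (Fin 3) ℂ).det ∈ Metric.sphere (0 : ℂ) 1 :=
    mem_sphere_zero_iff_norm.2 (CStarRing.norm_of_mem_unitary (det_of_mem_unitary m.2))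
  obtain ⟨μ, hμ⟩ := Circle.exists_pow_eq ⟨_, hdet⟩ three_ne_zero
  have hμ' : (μ : ℂ) ^ 3 = (m : Matrix (Fin 3) (Fin 3) ℂ).det := congrArg Subtype.val hμ
  have hg : (l, μ) ∈ Gab a b := by
    rw [mem_Gab_iff, ← Circle.coe_eq_one]
    push_cast
    rw [pow_mul, hμ']
    exact hy
  have hs := circle_smul_mem_specialUnitaryGroup μ⁻¹ m.2 (by
    rw [Fintype.card_fin, Circle.coe_inv, inv_pow, ← hμ',
      inv_mul_cancel₀ (pow_ne_zero _ μ.coe_ne_zero)])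
  refine ⟨(⟨_, hg⟩, q, ⟨_, hs⟩), Prod.ext rfl (Prod.ext rfl (Subtype.ext ?_))⟩
  change (μ : ℂ) • ((μ⁻¹ : Circle) : ℂ) • (m : Matrix (Fin 3) (Fin 3) ℂ) = m
  rw [smul_smul, Circle.coe_inv, mul_inv_cancel₀ μ.coe_ne_zero, one_smul]

lemma mem_Phi_ker_iff (x : Gab a b × SU2 × SU3) :
    x ∈ (Phi a b).ker ↔ ∃ ζ : Circle, ζ ^ 3 = 1 ∧
      (x.1 : Circle × Circle) = (1, ζ) ∧ x.2.1 = 1 ∧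
      (x.2.2 : Matrix (Fin 3) (Fin 3) ℂ) =
        ((ζ⁻¹ : Circle) : ℂ) • (1 : Matrix (Fin 3) (Fin 3) ℂ) := by
  obtain ⟨⟨⟨l, μ⟩, _⟩, q, s⟩ := x
  simp only [MonoidHom.mem_ker, Phi_apply, Prod.ext_iff, Prod.fst_one, Prod.snd_one,
    circleSMul_eq_one_iff]
  constructor
  · rintro ⟨hl, hq, hμ, hs⟩
    exact ⟨μ, hμ, ⟨hl, rfl⟩, hq, hs⟩
  · rintro ⟨ζ, hζ, ⟨hl, rfl⟩, hq, hs⟩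
    exact ⟨hl, hq, hζ, hs⟩

noncomputable def PhiKerToUnits (a b : ℕ) : (Phi a b).ker →* ℂˣ :=
  Circle.toUnits.comp <| (MonoidHom.snd Circle Circle).comp <| (Gab a b).subtype.comp <|
    (MonoidHom.fst _ _).comp (Phi a b).ker.subtype

lemma coe_PhiKerToUnits (x : (Phi a b).ker) :
    (PhiKerToUnits a b x : ℂ) = (((x : Gab a b × SU2 × SU3).1 : Circle × Circle).2 : ℂ) := rfl

lemma PhiKerToUnits_injective : Function.Injective (PhiKerToUnits a b) := by
  rw [injective_iff_map_eq_one]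
  rintro ⟨x, hx⟩ h1
  obtain ⟨ζ, -, hg, hq, hs⟩ := (mem_Phi_ker_iff x).mp hx
  have hζ : ζ = 1 := by
    rw [← Circle.coe_eq_one, ← Units.val_one, ← h1, coe_PhiKerToUnits, hg]
  subst hζ
  rw [inv_one, Circle.coe_one, one_smul] at hs
  exact Subtype.ext (Prod.ext (Subtype.ext hg) (Prod.ext hq (Subtype.ext hs)))

lemma PhiKerToUnits_range : (PhiKerToUnits a b).range = rootsOfUnity 3 ℂ := by
  ext u
  rw [MonoidHom.mem_range, mem_rootsOfUnity']
  constructor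
  · rintro ⟨⟨x, hx⟩, rfl⟩
    obtain ⟨ζ, hζ, hg, -, -⟩ := (mem_Phi_ker_iff x).mp hx
    rw [coe_PhiKerToUnits, hg, ← Circle.coe_pow, hζ, Circle.coe_one]
  · intro hu
    let ζ : Circle :=
      ⟨u, mem_sphere_zero_iff_norm.2 (Complex.norm_eq_one_of_pow_eq_one hu three_ne_zero)⟩
    have hζ : ζ ^ 3 = 1 := Circle.ext hu
    have hg : ((1, ζ) : Circle × Circle) ∈ Gab a b := by
      rw [mem_Gab_iff, one_pow, one_mul, pow_mul, hζ, one_pow]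
    have hs := circle_smul_mem_specialUnitaryGroup ζ⁻¹ (one_mem (unitaryGroup (Fin 3) ℂ)) (by
      rw [det_one, mul_one, Fintype.card_fin, ← Circle.coe_pow, inv_pow, hζ, inv_one,
        Circle.coe_one])
    have hx := (mem_Phi_ker_iff (⟨_, hg⟩, 1, ⟨_, hs⟩)).mpr ⟨ζ, hζ, rfl, rfl, rfl⟩
    exact ⟨⟨_, hx⟩, Units.ext rfl⟩

lemma card_Phi_ker : Nat.card (Phi a b).ker = 3 := by
  rw [Nat.card_congr (MonoidHom.ofInjective PhiKerToUnits_injective).toEquiv,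
    PhiKerToUnits_range, Complex.card_rootsOfUnity]

end Phi

theorem Phi_range_eq_Hab_and_ker_eq_Z3_general (a b : ℕ) :
    (Phi a b).range = Hab a b ∧
    (∀ x, x ∈ (Phi a b).ker ↔ ∃ ζ : Circle, ζ ^ 3 = 1 ∧
      (x.1 : Circle × Circle) = (1, ζ) ∧ x.2.1 = 1 ∧
      (x.2.2 : Matrix (Fin 3) (Fin 3) ℂ) =
        ((ζ⁻¹ : Circle) : ℂ) • (1 : Matrix (Fin 3) (Fin 3) ℂ)) ∧
    Nat.card (Phi a b).ker = 3 ∧ IsCyclic (Phi a b).ker :=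
  haveI : Fact (Nat.Prime 3) := ⟨Nat.prime_three⟩
  ⟨le_antisymm Phi_range_le_Hab Hab_le_Phi_range, mem_Phi_ker_iff, card_Phi_ker,
    isCyclic_of_prime_card card_Phi_ker⟩

/-- **The homomorphism `Φ` realizing the gauge group `SU(A)`.**
The map `Φ((λ, μ), q, s) = (λ, q, μ·s)` defines a group homomorphism
`G_{a,b} × SU(2) × SU(3) →* U(1) × SU(2) × U(3)` whose image is exactly the
subgroup `H_{a,b}` and whose kernel is `{((1, ζ), 1, ζ⁻¹·1₃) : ζ ∈ U(1), ζ³ = 1}`,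
a cyclic group of order 3. -/
theorem Phi_range_eq_Hab_and_ker_eq_Z3 (a b : ℕ) (ha : 0 < a) (hb : 0 < b) :
    (Phi a b).range = Hab a b ∧
    (∀ x, x ∈ (Phi a b).ker ↔ ∃ ζ : Circle, ζ ^ 3 = 1 ∧
      (x.1 : Circle × Circle) = (1, ζ) ∧ x.2.1 = 1 ∧
      (x.2.2 : Matrix (Fin 3) (Fin 3) ℂ) =
        ((ζ⁻¹ : Circle) : ℂ) • (1 : Matrix (Fin 3) (Fin 3) ℂ)) ∧
    Nat.card (Phi a b).ker = 3 ∧ IsCyclic (Phi a b).ker :=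
  Phi_range_eq_Hab_and_ker_eq_Z3_general a b
end

section
/- Let M₁₁, M₁₃, M_{1̄1}, M_{1̄3}, M₂₁, M₂₃ be natural numbers with M₁₃, M_{1̄1}, M_{1̄3}, M₂₁, M₂₃ each at least 1 (demand C.2: at least one copy of each Standard Model fermion; M₁₁, the number of right-handed neutrinos, is a priori unrestricted). Then the anomaly-cancellation equations (E1)–(E5) and the GUT relation hold if and only if M₁₁ = M₁₃ = M_{1̄1} = M_{1̄3} = M₂₁ = M₂₃; in particular a right-handed neutrino must appear in every generation. -/
/-- **The Standard Model from the NCG constraints.**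
With at least one copy of each SM fermion, the anomaly-cancellation equations
(E1)–(E5) together with the GUT relation hold if and only if all six multiplicities
are equal (so in particular a right-handed neutrino appears in every generation).
Here `t = a/b` with `a = 2M₁₁ + 2M₂₁ + 3M₁₃ − 3M₁̄₃` and `b = M₁₃ + M₁̄₃ + 2M₂₃`. -/
theorem sm_multiplicities_from_anomalies_and_GUT
    (M11 M13 Mb1 Mb3 M21 M23 : ℕ)
    (h13 : 1 ≤ M13) (hb1 : 1 ≤ Mb1) (hb3 : 1 ≤ Mb3) (h21 : 1 ≤ M21) (h23 : 1 ≤ M23)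
    (t : ℚ)
    (ht : t = (2 * (M11 : ℚ) + 2 * M21 + 3 * M13 - 3 * Mb3) /
      ((M13 : ℚ) + Mb3 + 2 * M23)) :
    ((-2 * (M21 : ℚ) + 2 * t * M23 - (3 + t) * M13 + 2 * Mb1 + (3 - t) * Mb3 = 0) ∧
     (6 * (t / 3) ^ 3 * (M23 : ℚ) - 3 * (1 + t / 3) ^ 3 * M13
        - 3 * (-1 + t / 3) ^ 3 * Mb3 - 2 * M21 + 8 * Mb1 = 0) ∧
     (2 * t * (M23 : ℚ) - 3 * (1 + t / 3) * M13 - 3 * (-1 + t / 3) * Mb3 = 0) ∧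
     (-2 * (M21 : ℚ) + 2 * t * M23 = 0) ∧
     (2 * (M23 : ℚ) - M13 - Mb3 = 0) ∧
     (12 * (Mb1 : ℚ) + 6 * M21 + 9 * (1 + t / 3) ^ 2 * M13
        + 9 * (-1 + t / 3) ^ 2 * Mb3 + 2 * t ^ 2 * M23 = 10 * ((M21 : ℚ) + 3 * M23)) ∧
     (10 * ((M21 : ℚ) + 3 * M23) = 10 * ((M13 : ℚ) + Mb3 + 2 * M23)))
    ↔ (M11 = M13 ∧ M13 = Mb1 ∧ Mb1 = Mb3 ∧ Mb3 = M21 ∧ M21 = M23) := by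
  have hM13pos : (0 : ℚ) < M13 := by exact_mod_cast h13
  have hM23pos : (0 : ℚ) < M23 := by exact_mod_cast h23
  have hden : (M13 : ℚ) + Mb3 + 2 * M23 ≠ 0 := by positivity
  constructor
  · rintro ⟨e1, e2, e3, e4, e5, g1, g2⟩
    have h1 : (M13 : ℚ) = Mb3 := by linear_combination (-1/3) * e3 + (t/3) * e5
    have h2 : (M23 : ℚ) = M13 := by linear_combination (1/2) * e5 - (1/2) * h1
    have h3 : (M21 : ℚ) = M13 := by linear_combination (1/10) * g2 - h2 - h1
    have htden : t * ((M13 : ℚ) + Mb3 + 2 * M23)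
        = 2 * (M11 : ℚ) + 2 * M21 + 3 * M13 - 3 * Mb3 := by
      rw [ht]; field_simp
    have ht0 : (t - 1) * (M13 : ℚ) = 0 := by
      linear_combination (1/2) * e4 - t * h2 + h3
    have ht1 : t = 1 := by
      rcases mul_eq_zero.mp ht0 with h | h
      · linarith
      · exact absurd h (ne_of_gt hM13pos)
    have h11 : (M11 : ℚ) = M13 := by
      rw [ht1] at htden
      linear_combination (-1/2) * htden - h3 - 2 * h1 + h2
    have hb : (Mb1 : ℚ) = M13 := by
      rw [ht1] at e1
      linear_combination (1/2) * e1 + h3 - h2 + h1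
    exact ⟨by exact_mod_cast h11, by exact_mod_cast hb.symm,
      by exact_mod_cast hb.trans h1, by exact_mod_cast h1.symm.trans h3.symm,
      by exact_mod_cast h3.trans h2.symm⟩
  · rintro ⟨a, b, c, d, e⟩
    subst a b c d e
    have ht1 : t = 1 := by
      rw [ht, div_eq_one_iff_eq hden]; ring
    subst ht1
    refine ⟨by ring, by ring, by ring, by ring, by ring, by ring, by ring⟩
end

section
/- Let M₁₁, M₁₃, M_{1̄1}, M_{1̄3}, M₂₁, M₂₃, M_{2 1̄} be natural numbers with M₁₃, M_{1̄1}, M_{1̄3}, M₂₁, M₂₃ each at least 1 (at least one copy of each Standard Model fermion) and M_{2 1̄} ≥ 1 (a non-zero number of copies of 2⊗1̄°, taken with negative chirality). Then the equations (E1′)–(E5′) and the GUT relation hold if and only if M₂₁ + M_{2 1̄} = M₂₃ = M_{1̄1} = M₁₃ = M_{1̄3} and M₁₁ = 3·M_{2 1̄} + M₂₁. -/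
/-- **Extending the SM by copies of `2 ⊗ 1̄°` of negative chirality.**
With at least one copy of each SM fermion and at least one copy of `2 ⊗ 1̄°`
(of negative chirality), the anomaly-cancellation equations (E1′)–(E5′) and the
GUT relation hold if and only if
`M₂₁ + M₂₁̄ = M₂₃ = M₁̄₁ = M₁₃ = M₁̄₃` and `M₁₁ = 3M₂₁̄ + M₂₁`.
Here `t = a/b` with `a = 2M₁₁ + 2M₂₁ − 2M₂₁̄ + 3M₁₃ − 3M₁̄₃`
and `b = M₁₃ + M₁̄₃ + 2M₂₃`. -/
theorem sm_extension_two_one_bar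
    (M11 M13 Mb1 Mb3 M21 M23 M2b1 : ℕ)
    (h13 : 1 ≤ M13) (hb1 : 1 ≤ Mb1) (hb3 : 1 ≤ Mb3) (h21 : 1 ≤ M21) (h23 : 1 ≤ M23)
    (h2b1 : 1 ≤ M2b1)
    (t : ℚ)
    (ht : t = (2 * (M11 : ℚ) + 2 * M21 - 2 * M2b1 + 3 * M13 - 3 * Mb3) /
      ((M13 : ℚ) + Mb3 + 2 * M23)) :
    ((-2 * ((M21 : ℚ) + M2b1) + 2 * t * M23 - (3 + t) * M13 + 2 * Mb1
        + (3 - t) * Mb3 = 0) ∧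
     (6 * (t / 3) ^ 3 * (M23 : ℚ) - 3 * (1 + t / 3) ^ 3 * M13
        - 3 * (-1 + t / 3) ^ 3 * Mb3 - 2 * ((M21 : ℚ) + M2b1) + 8 * Mb1 = 0) ∧
     (2 * t * (M23 : ℚ) - 3 * (1 + t / 3) * M13 - 3 * (-1 + t / 3) * Mb3 = 0) ∧
     (-2 * ((M21 : ℚ) + M2b1) + 2 * t * M23 = 0) ∧
     (2 * (M23 : ℚ) - M13 - Mb3 = 0) ∧
     (12 * (Mb1 : ℚ) + 6 * M21 + 6 * M2b1 + 9 * (1 + t / 3) ^ 2 * M13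
        + 9 * (-1 + t / 3) ^ 2 * Mb3 + 2 * t ^ 2 * M23
        = 10 * ((M21 : ℚ) + M2b1 + 3 * M23)) ∧
     (10 * ((M21 : ℚ) + M2b1 + 3 * M23) = 10 * ((M13 : ℚ) + Mb3 + 2 * M23)))
    ↔ (M21 + M2b1 = M23 ∧ M23 = Mb1 ∧ Mb1 = M13 ∧ M13 = Mb3 ∧
        M11 = 3 * M2b1 + M21) := by
  have q13 : (1 : ℚ) ≤ (M13 : ℚ) := by exact_mod_cast h13
  have qb3 : (1 : ℚ) ≤ (Mb3 : ℚ) := by exact_mod_cast hb3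
  have q23 : (1 : ℚ) ≤ (M23 : ℚ) := by exact_mod_cast h23
  have q21 : (1 : ℚ) ≤ (M21 : ℚ) := by exact_mod_cast h21
  have q2b1 : (1 : ℚ) ≤ (M2b1 : ℚ) := by exact_mod_cast h2b1
  have hbpos : (0 : ℚ) < (M13 : ℚ) + Mb3 + 2 * M23 := by linarith
  have hbne : ((M13 : ℚ) + Mb3 + 2 * M23) ≠ 0 := ne_of_gt hbpos
  have hta : t * ((M13 : ℚ) + Mb3 + 2 * M23)
      = 2 * (M11 : ℚ) + 2 * M21 - 2 * M2b1 + 3 * M13 - 3 * Mb3 := by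
    rw [ht]; field_simp
  constructor
  · rintro ⟨h1, h2, h3, h4, h5, h6, h7⟩
    -- M13 = Mb3
    have e2 : (Mb3 : ℚ) = M13 := by
      linear_combination (1/3 : ℚ) * h3 - (t/3) * h5
    -- M23 = M13
    have e3 : (M23 : ℚ) = M13 := by linarith
    -- Mb1 = t * M13
    have e1 : (Mb1 : ℚ) = t * M13 := by
      linear_combination (1/2) * h1 - (1/2) * h4 - ((3 - t)/2) * e2
    -- M21 + M2b1 = t * M13
    have e4 : (M21 : ℚ) + M2b1 = t * M13 := by
      linear_combination (-1/2 : ℚ) * h4 + t * e3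
    -- factored quadratic for t
    have key : (t - 1) * (t + 3) * (M13 : ℚ) = 0 := by
      linear_combination (1/4 : ℚ) * h6 + e4 - 3 * e1
        - ((9 - 6*t + t^2)/4) * e2 - (t^2/2 - 15/2) * e3
    have hM13ne : (M13 : ℚ) ≠ 0 := by intro h; rw [h] at q13; linarith
    have ht1 : t = 1 := by
      rcases mul_eq_zero.mp key with h | h
      · rcases mul_eq_zero.mp h with h' | h'
        · linarith
        · -- t = -3 impossible
          have : t = -3 := by linarith
          rw [this] at e4; linarith
      · exact absurd h hM13ne
    rw [ht1] at e1 e4 hta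
    refine ⟨?_, ?_, ?_, ?_, ?_⟩
    · have : (M21 : ℚ) + M2b1 = M23 := by linarith
      exact_mod_cast this
    · have : (M23 : ℚ) = Mb1 := by linarith
      exact_mod_cast this
    · have : (Mb1 : ℚ) = M13 := by linarith
      exact_mod_cast this
    · have : (M13 : ℚ) = Mb3 := by linarith
      exact_mod_cast this
    · have : (M11 : ℚ) = 3 * M2b1 + M21 := by linarith
      exact_mod_cast this
  · rintro ⟨g1, g2, g3, g4, g5⟩
    have q1 : (M21 : ℚ) + M2b1 = M23 := by exact_mod_cast g1
    have q2 : (M23 : ℚ) = Mb1 := by exact_mod_cast g2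
    have q3 : (Mb1 : ℚ) = M13 := by exact_mod_cast g3
    have q4 : (M13 : ℚ) = Mb3 := by exact_mod_cast g4
    have q5 : (M11 : ℚ) = 3 * M2b1 + M21 := by exact_mod_cast g5
    have ht1 : t = 1 := by
      rw [ht, div_eq_one_iff_eq hbne]; linarith
    rw [ht1]
    refine ⟨by linear_combination (-2 : ℚ) * q1 + 2 * q3 - 2 * q4,
      by linear_combination (-2 : ℚ) * q1 - (16/9) * q2 + (56/9) * q3 - (8/9) * q4,
      by linear_combination (2 : ℚ) * q2 + 2 * q3 - 2 * q4,
      by linear_combination (-2 : ℚ) * q1,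
      by linear_combination (2 : ℚ) * q2 + 2 * q3 + q4,
      by linear_combination (-4 : ℚ) * q1 - 32 * q2 - 20 * q3 - 4 * q4,
      by linear_combination (10 : ℚ) * q1 + 20 * q2 + 20 * q3 + 10 * q4⟩
end

section
/- For every natural number M₁₃ ≥ 1 and every rational number t, the two equalities (18 + 18t + 4t²)·M₁₃ + 12 = 10·((t + 3)·M₁₃ + 6) and 10·((t + 3)·M₁₃ + 6) = 10·(4·M₁₃ + 6) cannot hold simultaneously. Hence there is no choice of multiplicities for the Standard Model extended by two copies of the gauginos and a single copy of the higgsinos that satisfies the GUT relation. -/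
/-- **No GUT relation for the SM extended by gauginos and higgsinos.**
For every `M₁₃ ≥ 1` and every rational `t`, the two equalities
`(18 + 18t + 4t²)·M₁₃ + 12 = 10·((t+3)·M₁₃ + 6)` and
`10·((t+3)·M₁₃ + 6) = 10·(4·M₁₃ + 6)` cannot hold simultaneously. -/
theorem no_GUT_relation_for_gaugino_higgsino_extension
    (M13 : ℕ) (h13 : 1 ≤ M13) (t : ℚ) :
    ¬(((18 + 18 * t + 4 * t ^ 2) * (M13 : ℚ) + 12 = 10 * ((t + 3) * M13 + 6)) ∧
      (10 * ((t + 3) * (M13 : ℚ) + 6) = 10 * (4 * M13 + 6))) := by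
  rintro ⟨h1, h2⟩
  have hM : (M13 : ℚ) ≠ 0 := by
    have h : M13 ≠ 0 := by omega
    exact_mod_cast h
  have ht : t = 1 := by
    have : (t - 1) * (M13 : ℚ) = 0 := by ring_nf; ring_nf at h2; linarith
    rcases mul_eq_zero.mp this with h | h
    · linarith
    · exact absurd h hM
  subst ht
  have : (40 : ℚ) * M13 + 12 = 40 * M13 + 60 := by ring_nf; ring_nf at h1 h2; linarith
  linarith
end

section
/- For all positive integers N_i, N_j, M, the equation 3N_i/(2N_i + M·N_j) + 3N_j/(M·N_i + 2N_j) = 1 (in ℚ) holds if and only if M = 4 and N_i = N_j. -/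
private lemma susy_no189 (v : ℤ) (hv0 : 0 ≤ v) (h : v^2 = 189) : False := by
  have hle : v ≤ 13 := by nlinarith
  have hge : 14 ≤ v := by nlinarith
  linarith

private lemma susy_no_sq (p v : ℤ) (hp : 36 ≤ p) (hv0 : 0 ≤ v)
    (hv2 : v^2 = p^2 - 20*p + 64) : False := by
  have hlo : p - 11 < v := by
    by_contra hcon
    push_neg at hcon
    nlinarith [mul_nonneg (sub_nonneg.2 hcon) (by linarith : (0:ℤ) ≤ p - 11 + v)]
  have hhi : v < p - 10 := by
    by_contra hcon
    push_neg at hcon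
    nlinarith [mul_nonneg (sub_nonneg.2 hcon) (by linarith : (0:ℤ) ≤ v + (p - 10))]
  linarith

private lemma susy_key (Ni Nj M : ℕ) (hi : 0 < Ni) (hj : 0 < Nj) (hM : 0 < M)
    (key : (M:ℤ) * ((Ni:ℤ)^2 + (Nj:ℤ)^2) + 8 * Ni * Nj = M^2 * Ni * Nj) :
    M = 4 ∧ Ni = Nj := by
  obtain ⟨A, hA1, hAe⟩ : ∃ A : ℤ, 1 ≤ A ∧ (Ni:ℤ) = A := ⟨Ni, by exact_mod_cast hi, rfl⟩
  obtain ⟨B, hB1, hBe⟩ : ∃ B : ℤ, 1 ≤ B ∧ (Nj:ℤ) = B := ⟨Nj, by exact_mod_cast hj, rfl⟩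
  obtain ⟨m, hm1, hme⟩ : ∃ m : ℤ, 1 ≤ m ∧ (M:ℤ) = m := ⟨M, by exact_mod_cast hM, rfl⟩
  rw [hAe, hBe, hme] at key
  have hAB1 : 1 ≤ A * B := one_le_mul_of_one_le_of_one_le hA1 hB1
  have h1 : (m^2 - 2*m - 8) * (A*B) = m * (A - B)^2 := by linear_combination -key
  have h1' : 0 ≤ (m^2 - 2*m - 8) * (A*B) := by
    rw [h1]; exact mul_nonneg (by linarith) (sq_nonneg _)
  have hm4 : 4 ≤ m := by
    by_contra hcon
    push_neg at hcon
    have hc : m^2 - 2*m - 8 ≤ -5 := by nlinarith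
    nlinarith [h1', hAB1, hc]
  rcases eq_or_lt_of_le hm4 with h4 | h5
  · subst h4
    have hM4 : M = 4 := by exact_mod_cast hme
    refine ⟨hM4, ?_⟩
    have hsq4 : 4 * (A - B)^2 = 0 := by linear_combination key
    have hsq : (A - B)^2 = 0 := by linarith
    have hABeq : A = B := by
      have := pow_eq_zero_iff (n := 2) (by norm_num) |>.mp hsq; linarith
    rw [← @Nat.cast_inj ℤ, hAe, hBe, hABeq]
  · exfalso
    have hT : (2*m*A - (m^2 - 8)*B)^2 = (m^4 - 20*m^2 + 64) * B^2 := by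
      linear_combination (4*m) * key
    have hdvd : B ∣ (2*m*A - (m^2 - 8)*B) :=
      (Int.pow_dvd_pow_iff (by norm_num : (2:ℕ) ≠ 0)).mp ⟨m^4 - 20*m^2 + 64, by rw [hT]; ring⟩
    obtain ⟨u, hu⟩ := hdvd
    have hB2 : B^2 ≠ 0 := by positivity
    have hu2 : u^2 = m^4 - 20*m^2 + 64 := by
      have h2 : B^2 * u^2 = B^2 * (m^4 - 20*m^2 + 64) := by
        rw [show B^2 * u^2 = (B*u)^2 by ring, ← hu, hT]; ring
      exact mul_left_cancel₀ hB2 h2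
    obtain ⟨v, hv0, hve⟩ : ∃ v : ℤ, 0 ≤ v ∧ |u| = v := ⟨|u|, abs_nonneg u, rfl⟩
    have hv2 : v^2 = m^4 - 20*m^2 + 64 := by rw [← hve, sq_abs, hu2]
    rcases eq_or_lt_of_le (by linarith : (5:ℤ) ≤ m) with h5' | h6
    · exact susy_no189 v hv0 (by rw [hv2, ← h5']; ring)
    · refine susy_no_sq (m^2) v (by nlinarith) hv0 ?_
      rw [hv2]; ring

/-- **Supersymmetry consistency condition for a single building block of the second type.**
For positive integers `Nᵢ, Nⱼ, M`, one has
`3Nᵢ/(2Nᵢ + M·Nⱼ) + 3Nⱼ/(M·Nᵢ + 2Nⱼ) = 1` (in `ℚ`) iff `M = 4` and `Nᵢ = Nⱼ`. -/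
theorem second_type_susy_consistency
    (Ni Nj M : ℕ) (hi : 0 < Ni) (hj : 0 < Nj) (hM : 0 < M) :
    3 * (Ni : ℚ) / (2 * Ni + M * Nj) + 3 * (Nj : ℚ) / (M * Ni + 2 * Nj) = 1 ↔
      M = 4 ∧ Ni = Nj := by
  have hi' : (0:ℚ) < Ni := by exact_mod_cast hi
  have hj' : (0:ℚ) < Nj := by exact_mod_cast hj
  have hM' : (0:ℚ) < M := by exact_mod_cast hM
  have d1 : (2 * (Ni:ℚ) + M * Nj) ≠ 0 := by positivity
  have d2 : ((M:ℚ) * Ni + 2 * Nj) ≠ 0 := by positivity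
  constructor
  · intro h
    have keyQ : (M:ℚ) * ((Ni:ℚ)^2 + (Nj:ℚ)^2) + 8 * Ni * Nj = M^2 * Ni * Nj := by
      field_simp at h
      linear_combination h
    have keyZ : (M:ℤ) * ((Ni:ℤ)^2 + (Nj:ℤ)^2) + 8 * Ni * Nj = M^2 * Ni * Nj := by
      exact_mod_cast keyQ
    exact susy_key Ni Nj M hi hj hM keyZ
  · rintro ⟨rfl, rfl⟩
    have hNi : (Ni:ℚ) ≠ 0 := ne_of_gt hi'
    field_simp
    ring
end

section
/- For positive integers N_i, N_j, N_k, M, the constraint M·ω_ik/N_j = M·ω_jk/N_i = ω_ij/N_k (with r_i, r_j, r_k and ω_ij, ω_ik, ω_jk as defined) holds if and only if N_i = N_j = N_k and M = 1 or M = 2. Moreover, in the case M = 1 one has r_i·N_i = r_j·N_j = r_k·N_k = 3/4 and ω_ij = ω_ik = ω_jk = −1/2, while in the case M = 2 one has r_i·N_i = r_j·N_j = 3/5, r_k·N_k = 1/2, ω_ij = −1/5 and ω_ik = ω_jk = −1/10. -/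
/-!
Write `x, y, z` for `rᵢNᵢ, rⱼNⱼ, rₖNₖ`, so that `ω_ij = 1 - x - y` etc. Subtracting the cleared
demands `M Nₖ ω_ik = Nⱼ ω_ij` and `M Nₖ ω_jk = Nᵢ ω_ij`, the share `z` cancels and what remains is
`(Nⱼ - Nᵢ)(s² + M Nₖ s + 5 Nᵢ Nⱼ) = 0` with `s = Nᵢ + Nⱼ + M Nₖ`, forcing `Nᵢ = Nⱼ`. The second
demand then says that `u = M Nₖ / Nᵢ` is a root of the monic integer cubic
`u³ + (11 - 2M²) u² + (2M² - 6) u - 6M²`, so `u` is an integer by the rational root theorem.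
Rewriting the cubic as `(2M² - u - 12)(u² - u + 3) = 3u - 36` shows `u ≤ 12`, since otherwise
`2M²` would lie strictly between `u + 12` and `u + 13`; the remaining cases leave only
`u = M ∈ {1, 2}`, i.e. `Nₖ = Nᵢ`.
-/

open Polynomial

lemma Rat.exists_int_eq_of_monic_cubic {u : ℚ} {b c d : ℤ}
    (h : u ^ 3 + b * u ^ 2 + c * u + d = 0) : ∃ n : ℤ, u = n := by
  obtain ⟨n, hn, -⟩ := exists_integer_of_is_root_of_monic (K := ℚ)
    (p := X ^ 3 + C b * X ^ 2 + C c * X + C d) (by monicity!) (by simpa using h)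
  exact ⟨n, by simpa using hn⟩

lemma eq_and_eq_one_or_two_of_cubic {u : ℤ} {m : ℕ} (hu : 0 < u)
    (h : u ^ 3 + (11 - 2 * m ^ 2) * u ^ 2 + (2 * m ^ 2 - 6) * u - 6 * m ^ 2 = 0) :
    u = m ∧ (m = 1 ∨ m = 2) := by
  have key : (2 * m ^ 2 - u - 12) * (u ^ 2 - u + 3) = 3 * u - 36 := by
    linear_combination -h
  have hu12 : u ≤ 12 := by
    by_contra! hu12
    have hQ : 0 < u ^ 2 - u + 3 := by nlinarith
    rcases le_or_gt (2 * (m : ℤ) ^ 2 - u - 12) 0 with hk | hk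
    · nlinarith [mul_le_mul_of_nonneg_right hk hQ.le]
    · nlinarith [mul_le_mul_of_nonneg_right (show (1 : ℤ) ≤ _ from hk) hQ.le]
  have hm6 : m ≤ 6 := by
    by_contra! hm6
    have hm49 : (49 : ℤ) ≤ (m : ℤ) ^ 2 := by nlinarith
    have hQ : 0 < u ^ 2 - u + 3 := by nlinarith
    nlinarith [mul_le_mul_of_nonneg_right hm49 hQ.le,
      mul_le_mul_of_nonneg_right hu12 (sq_nonneg u)]
  interval_cases u <;> interval_cases m <;> omega

section

variable {K : Type*} [Field K] [LinearOrder K] [IsStrictOrderedRing K]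

lemma eq_of_share_balance {a b c m x y : K} (ha : 0 < a) (hb : 0 < b) (hc : 0 < c)
    (hm : 0 < m) (hx : x = 3 * a / (2 * a + b + m * c)) (hy : y = 3 * b / (a + 2 * b + m * c))
    (h : m * c * (y - x) = (b - a) * (1 - x - y)) : a = b := by
  have hpos : 0 < (a + b + m * c) ^ 2 + m * c * (a + b + m * c) + 5 * a * b := by positivity
  have key : (b - a) * ((a + b + m * c) ^ 2 + m * c * (a + b + m * c) + 5 * a * b) = 0 := by
    subst hx hy
    field_simp at h
    linear_combination h
  exact (sub_eq_zero.mp ((mul_eq_zero.mp key).resolve_right hpos.ne')).symm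

lemma cubic_of_share_balance {a c m x z : K} (ha : 0 < a) (hc : 0 < c) (hm : 0 < m)
    (hx : x = 3 * a / (3 * a + m * c)) (hz : z = 3 * c / (2 * m * a + 2 * c))
    (h : m * c * (1 - x - z) = a * (1 - 2 * x)) :
    (m * c / a) ^ 3 + (11 - 2 * m ^ 2) * (m * c / a) ^ 2 + (2 * m ^ 2 - 6) * (m * c / a)
      - 6 * m ^ 2 = 0 := by
  subst hx hz
  field_simp at h ⊢
  linear_combination (-m) * h

end

lemma eq_and_eq_one_or_two_of_cubic_ratio {a c m : ℕ} (ha : 0 < a) (hc : 0 < c) (hm : 0 < m)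
    (h : (m * c / a : ℚ) ^ 3 + (11 - 2 * m ^ 2) * (m * c / a) ^ 2 + (2 * m ^ 2 - 6) * (m * c / a)
      - 6 * m ^ 2 = 0) :
    a = c ∧ (m = 1 ∨ m = 2) := by
  obtain ⟨u, hu⟩ := Rat.exists_int_eq_of_monic_cubic (u := m * c / a)
    (b := 11 - 2 * (m : ℤ) ^ 2) (c := 2 * (m : ℤ) ^ 2 - 6) (d := -6 * (m : ℤ) ^ 2)
    (by push_cast; linear_combination h)
  have hu_pos : 0 < u := by
    have : (0 : ℚ) < m * c / a := by positivity
    exact_mod_cast hu ▸ this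
  obtain ⟨rfl, hm12⟩ := eq_and_eq_one_or_two_of_cubic hu_pos (by rw [hu] at h; exact_mod_cast h)
  refine ⟨?_, hm12⟩
  push_cast at hu
  field_simp at hu
  exact_mod_cast hu.symm

section

variable {Ni Nj Nk M : ℕ} {ri rj rk ωij ωik ωjk : ℚ}

lemma eq_and_eq_one_or_two_of_susy_demand (hi : 0 < Ni) (hj : 0 < Nj) (hk : 0 < Nk) (hM : 0 < M)
    (hri : ri = 3 / (2 * Ni + Nj + M * Nk))
    (hrj : rj = 3 / ((Ni : ℚ) + 2 * Nj + M * Nk))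
    (hrk : rk = 3 / (M * ((Ni : ℚ) + Nj) + 2 * Nk))
    (hωij : ωij = 1 - ri * Ni - rj * Nj)
    (hωik : ωik = 1 - ri * Ni - rk * Nk)
    (hωjk : ωjk = 1 - rj * Nj - rk * Nk)
    (h₁ : M * ωik / Nj = M * ωjk / Ni) (h₂ : M * ωjk / Ni = ωij / Nk) :
    Ni = Nj ∧ Nj = Nk ∧ (M = 1 ∨ M = 2) := by
  have hi' : (0 : ℚ) < Ni := by exact_mod_cast hi
  have hj' : (0 : ℚ) < Nj := by exact_mod_cast hj
  have hk' : (0 : ℚ) < Nk := by exact_mod_cast hk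
  have hM' : (0 : ℚ) < M := by exact_mod_cast hM
  have e_jk : M * ωjk * Nk = ωij * Ni := (div_eq_div_iff hi'.ne' hk'.ne').mp h₂
  have e_ik : M * ωik * Nk = ωij * Nj := (div_eq_div_iff hj'.ne' hk'.ne').mp (h₁.trans h₂)
  subst hωij hωik hωjk
  obtain rfl : Ni = Nj := by
    have := eq_of_share_balance hi' hj' hk' hM' (x := ri * Ni) (y := rj * Nj)
      (by rw [hri]; ring) (by rw [hrj]; ring) (by linear_combination e_ik - e_jk)
    exact_mod_cast this
  have hxy : rj * Ni = ri * Ni := by rw [hri, hrj]; ring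
  obtain ⟨hik, hM12⟩ := eq_and_eq_one_or_two_of_cubic_ratio hi hk hM <|
    cubic_of_share_balance hi' hk' hM' (x := ri * Ni) (z := rk * Nk)
      (by rw [hri]; ring) (by rw [hrk]; ring) (by linear_combination e_jk + (M * Nk - Ni) * hxy)
  exact ⟨rfl, hik, hM12⟩

lemma shares_of_ranks_eq (hri : ri = 3 / (2 * Ni + Nj + M * Nk))
    (hrj : rj = 3 / ((Ni : ℚ) + 2 * Nj + M * Nk))
    (hrk : rk = 3 / (M * ((Ni : ℚ) + Nj) + 2 * Nk))
    (hi : 0 < Ni) (hij : Ni = Nj) (hjk : Nj = Nk) :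
    ri * Ni = 3 / (3 + M) ∧ rj * Nj = 3 / (3 + M) ∧ rk * Nk = 3 / (2 * M + 2) := by
  subst hij hjk
  have : (Ni : ℚ) ≠ 0 := by positivity
  refine ⟨?_, ?_, ?_⟩ <;> [rw [hri]; rw [hrj]; rw [hrk]] <;> field_simp <;> ring

lemma shares_and_omegas_of_one_generation (hri : ri = 3 / (2 * Ni + Nj + M * Nk))
    (hrj : rj = 3 / ((Ni : ℚ) + 2 * Nj + M * Nk))
    (hrk : rk = 3 / (M * ((Ni : ℚ) + Nj) + 2 * Nk))
    (hωij : ωij = 1 - ri * Ni - rj * Nj)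
    (hωik : ωik = 1 - ri * Ni - rk * Nk)
    (hωjk : ωjk = 1 - rj * Nj - rk * Nk)
    (hi : 0 < Ni) (hij : Ni = Nj) (hjk : Nj = Nk) (hM : M = 1) :
    ri * Ni = 3 / 4 ∧ rj * Nj = 3 / 4 ∧ rk * Nk = 3 / 4 ∧
      ωij = -(1 / 2) ∧ ωik = -(1 / 2) ∧ ωjk = -(1 / 2) := by
  obtain ⟨hx, hy, hz⟩ := shares_of_ranks_eq hri hrj hrk hi hij hjk
  norm_num [hM] at hx hy hz
  exact ⟨hx, hy, hz, by linarith, by linarith, by linarith⟩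

lemma shares_and_omegas_of_two_generations (hri : ri = 3 / (2 * Ni + Nj + M * Nk))
    (hrj : rj = 3 / ((Ni : ℚ) + 2 * Nj + M * Nk))
    (hrk : rk = 3 / (M * ((Ni : ℚ) + Nj) + 2 * Nk))
    (hωij : ωij = 1 - ri * Ni - rj * Nj)
    (hωik : ωik = 1 - ri * Ni - rk * Nk)
    (hωjk : ωjk = 1 - rj * Nj - rk * Nk)
    (hi : 0 < Ni) (hij : Ni = Nj) (hjk : Nj = Nk) (hM : M = 2) :
    ri * Ni = 3 / 5 ∧ rj * Nj = 3 / 5 ∧ rk * Nk = 1 / 2 ∧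
      ωij = -(1 / 5) ∧ ωik = -(1 / 10) ∧ ωjk = -(1 / 10) := by
  obtain ⟨hx, hy, hz⟩ := shares_of_ranks_eq hri hrj hrk hi hij hjk
  norm_num [hM] at hx hy hz
  exact ⟨hx, hy, hz, by linarith, by linarith, by linarith⟩

end

/-- **First supersymmetry demand for a single building block of the third type.**
With `rᵢ = 3/(2Nᵢ + Nⱼ + M·Nₖ)`, `rⱼ = 3/(Nᵢ + 2Nⱼ + M·Nₖ)`,
`rₖ = 3/(M(Nᵢ + Nⱼ) + 2Nₖ)` and `ω_ij = 1 − rᵢNᵢ − rⱼNⱼ`, etc., the constraint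
`M·ω_ik/Nⱼ = M·ω_jk/Nᵢ = ω_ij/Nₖ` holds iff `Nᵢ = Nⱼ = Nₖ` and `M = 1 ∨ M = 2`;
moreover in case `M = 1` one has `rᵢNᵢ = rⱼNⱼ = rₖNₖ = 3/4` and all `ω = −1/2`,
while in case `M = 2` one has `rᵢNᵢ = rⱼNⱼ = 3/5`, `rₖNₖ = 1/2`, `ω_ij = −1/5` and
`ω_ik = ω_jk = −1/10`. -/
theorem third_type_first_susy_demand
    (Ni Nj Nk M : ℕ) (hi : 0 < Ni) (hj : 0 < Nj) (hk : 0 < Nk) (hM : 0 < M)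
    (ri rj rk ωij ωik ωjk : ℚ)
    (hri : ri = 3 / (2 * Ni + Nj + M * Nk))
    (hrj : rj = 3 / ((Ni : ℚ) + 2 * Nj + M * Nk))
    (hrk : rk = 3 / (M * ((Ni : ℚ) + Nj) + 2 * Nk))
    (hωij : ωij = 1 - ri * Ni - rj * Nj)
    (hωik : ωik = 1 - ri * Ni - rk * Nk)
    (hωjk : ωjk = 1 - rj * Nj - rk * Nk) :
    ((M * ωik / Nj = M * ωjk / Ni ∧ M * ωjk / Ni = ωij / Nk) ↔
      (Ni = Nj ∧ Nj = Nk ∧ (M = 1 ∨ M = 2))) ∧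
    ((M * ωik / Nj = M * ωjk / Ni ∧ M * ωjk / Ni = ωij / Nk) → M = 1 →
      (ri * Ni = 3 / 4 ∧ rj * Nj = 3 / 4 ∧ rk * Nk = 3 / 4 ∧
        ωij = -(1 / 2) ∧ ωik = -(1 / 2) ∧ ωjk = -(1 / 2))) ∧
    ((M * ωik / Nj = M * ωjk / Ni ∧ M * ωjk / Ni = ωij / Nk) → M = 2 →
      (ri * Ni = 3 / 5 ∧ rj * Nj = 3 / 5 ∧ rk * Nk = 1 / 2 ∧
        ωij = -(1 / 5) ∧ ωik = -(1 / 10) ∧ ωjk = -(1 / 10))) := by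
  have forward (h : M * ωik / Nj = M * ωjk / Ni ∧ M * ωjk / Ni = ωij / Nk) :=
    eq_and_eq_one_or_two_of_susy_demand hi hj hk hM hri hrj hrk hωij hωik hωjk h.1 h.2
  refine ⟨⟨forward, ?_⟩, fun h hM1 => ?_, fun h hM2 => ?_⟩
  · rintro ⟨hij, hjk, hM12 | hM12⟩
    · obtain ⟨-, -, -, h₁, h₂, h₃⟩ :=
        shares_and_omegas_of_one_generation hri hrj hrk hωij hωik hωjk hi hij hjk hM12
      rw [h₁, h₂, h₃, hM12, ← hjk, ← hij]
      norm_num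
    · obtain ⟨-, -, -, h₁, h₂, h₃⟩ :=
        shares_and_omegas_of_two_generations hri hrj hrk hωij hωik hωjk hi hij hjk hM12
      rw [h₁, h₂, h₃, hM12, ← hjk, ← hij]
      norm_num
  · exact shares_and_omegas_of_one_generation hri hrj hrk hωij hωik hωjk hi
      (forward h).1 (forward h).2.1 hM1
  · exact shares_and_omegas_of_two_generations hri hrj hrk hωij hωik hωjk hi
      (forward h).1 (forward h).2.1 hM2
end

section
/- There do not exist positive integers N_i, N_j, N_k, M such that (with r_i, r_j, r_k and ω_ij, ω_ik, ω_jk as defined) the constraint M·ω_ik/N_j = M·ω_jk/N_i = ω_ij/N_k holds together with 2·(1 − 2ω_ik)·ω_ik = r_j·N_j and 2·(1 − 2ω_jk)·ω_jk = r_i·N_i. (These are among the requirements for the spectral action of a single building block of the third type to be supersymmetric; hence an almost-commutative geometry consisting of a single building block of the third type, together with the building blocks of the first and second type needed to define it, is never supersymmetric.) -/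
/-!
Write `xᵢ = rᵢNᵢ`, `xⱼ = rⱼNⱼ`, `xₖ = rₖNₖ`, so that `ω_ik − ω_jk = xⱼ − xᵢ`. Subtracting the two
quadratic conditions then gives `(ω_ik − ω_jk)(1 − 4(ω_ik + ω_jk)) = 0`. The constraint says that
`(Nᵢ, Nⱼ, M·Nₖ)` is proportional to `(ω_jk, ω_ik, ω_ij)`, which turns `xᵢ = 3Nᵢ/(2Nᵢ + Nⱼ + M·Nₖ)`
into `xᵢ(2ω_jk + ω_ik + ω_ij) = 3ω_jk`. In either case everything becomes a function of one
variable, and this last equation reduces to a cubic with no root in the range allowed by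
`ω_jk > 0`, which holds because `2(1 − 2ω_jk)ω_jk = xᵢ > 0`.
-/

section OrderedField

variable {K : Type*} [Field K] [LinearOrder K] [IsStrictOrderedRing K]

theorem eq_or_add_eq_quarter {a b : K}
    (h : 2 * (1 - 2 * a) * a - 2 * (1 - 2 * b) * b = a - b) : a = b ∨ a + b = 1 / 4 := by
  have hfactor : (a - b) * (1 - 4 * (a + b)) = 0 := by linear_combination h
  rcases mul_eq_zero.mp hfactor with hab | hab
  · exact Or.inl (sub_eq_zero.mp hab)
  · exact Or.inr (by linear_combination -hab / 4)

theorem mul_eq_of_proportional {A B P x a b w : K} (hA : A ≠ 0)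
    (hx : x * (2 * A + B + P) = 3 * A) (hab : A * a = B * b) (hbw : P * b = A * w) :
    x * (2 * b + a + w) = 3 * b := by
  refine mul_left_cancel₀ hA ?_
  linear_combination b * hx + x * hab - x * hbw

theorem omega_system_inconsistent {xi xj xk a b w : K} (hxi : 0 < xi)
    (ha : a = 1 - xi - xk) (hb : b = 1 - xj - xk) (hw : w = 1 - xi - xj)
    (hqa : 2 * (1 - 2 * a) * a = xj) (hqb : 2 * (1 - 2 * b) * b = xi)
    (hE : xi * (2 * b + a + w) = 3 * b) : False := by
  have hb_pos : 0 < b := by nlinarith [sq_nonneg b]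
  rw [hw, ← hqa, ← hqb] at hE
  rcases eq_or_add_eq_quarter (show 2 * (1 - 2 * a) * a - 2 * (1 - 2 * b) * b = a - b by
      linear_combination hqa - hqb - ha + hb) with rfl | hab
  · have hcubic : a * (3 - (2 - 4 * a) * (1 - a + 8 * a ^ 2)) = 0 := by
      linear_combination -hE
    refine (mul_pos hb_pos ?_).ne' hcubic
    nlinarith [mul_nonneg hb_pos.le (sq_nonneg (a - 5 / 16))]
  · obtain rfl : b = 1 / 4 - a := by linear_combination hab
    have hcubic : (1 / 4 - a) * (3 - (1 + 4 * a) * (5 / 4 - 3 * a + 8 * a ^ 2)) = 0 := by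
      linear_combination -hE
    refine (mul_pos hb_pos ?_).ne' hcubic
    nlinarith [mul_nonneg hb_pos.le (sq_nonneg (a + 1 / 16))]

end OrderedField

/-- **A single building block of the third type is never supersymmetric.**
There are no positive integers `Nᵢ, Nⱼ, Nₖ, M` such that (with `rᵢ, rⱼ, rₖ` and
`ω_ij, ω_ik, ω_jk` as defined) the constraint `M·ω_ik/Nⱼ = M·ω_jk/Nᵢ = ω_ij/Nₖ`
holds together with `2(1 − 2ω_ik)ω_ik = rⱼNⱼ` and `2(1 − 2ω_jk)ω_jk = rᵢNᵢ`. -/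
theorem no_supersymmetric_single_third_type_building_block :
    ¬ ∃ (Ni Nj Nk M : ℕ) (ri rj rk ωij ωik ωjk : ℚ),
      0 < Ni ∧ 0 < Nj ∧ 0 < Nk ∧ 0 < M ∧
      ri = 3 / (2 * (Ni : ℚ) + Nj + M * Nk) ∧
      rj = 3 / ((Ni : ℚ) + 2 * Nj + M * Nk) ∧
      rk = 3 / (M * ((Ni : ℚ) + Nj) + 2 * Nk) ∧
      ωij = 1 - ri * Ni - rj * Nj ∧
      ωik = 1 - ri * Ni - rk * Nk ∧
      ωjk = 1 - rj * Nj - rk * Nk ∧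
      (M * ωik / Nj = M * ωjk / Ni ∧ M * ωjk / Ni = ωij / Nk) ∧
      2 * (1 - 2 * ωik) * ωik = rj * Nj ∧
      2 * (1 - 2 * ωjk) * ωjk = ri * Ni := by
  rintro ⟨Ni, Nj, Nk, M, ri, rj, rk, ωij, ωik, ωjk, hNi, hNj, hNk, hM, hri, -, -,
    hωij, hωik, hωjk, ⟨hc1, hc2⟩, hq1, hq2⟩
  have hNi' : (Ni : ℚ) ≠ 0 := by positivity
  have hNj' : (Nj : ℚ) ≠ 0 := by positivity
  have hNk' : (Nk : ℚ) ≠ 0 := by positivity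
  have hM' : (M : ℚ) ≠ 0 := by positivity
  have hDi : (2 * (Ni : ℚ) + Nj + M * Nk) ≠ 0 := by positivity
  have hxi : ri * Ni * (2 * Ni + Nj + M * Nk) = 3 * Ni := by
    rw [hri]; field_simp
  have hab : (Ni : ℚ) * ωik = Nj * ωjk := by
    rw [div_eq_div_iff hNj' hNi'] at hc1
    exact mul_left_cancel₀ hM' (by linear_combination hc1)
  have hbw : (M * Nk : ℚ) * ωjk = Ni * ωij := by
    rw [div_eq_div_iff hNi' hNk'] at hc2
    linear_combination hc2
  exact omega_system_inconsistent (by rw [hri]; positivity) hωik hωjk hωij hq1 hq2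
    (mul_eq_of_proportional hNi' hxi hab hbw)
end

section
/- Assume a_u ≠ 0 and a_d ≠ 0, M ≥ 1, and that the relations (R1) and (R2) hold. Then M·(ω₁₁ + 3ω₁₃) = 2·ω₁₂, ω₁₂·(2 − M) = 3M·ω₂₃, ω₁₁ = ω₁₂, and ω₁₃ = ω₂₃. -/
open Matrix

/-- **Consequences of the supersymmetry constraints of the noncommutative MSSM.**
Given the Yukawa matrices `Υν, Υe, Υu, Υd` with `a_u ≠ 0`, `a_d ≠ 0` and the
relations (R1) and (R2), the coefficients satisfy `M(ω₁₁ + 3ω₁₃) = 2ω₁₂`,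
`ω₁₂(2 − M) = 3Mω₂₃`, `ω₁₁ = ω₁₂` and `ω₁₃ = ω₂₃`. -/
theorem ncmssm_susy_constraint_consequences
    (M : ℕ) (hM : 1 ≤ M)
    (Υν Υe Υu Υd : Matrix (Fin M) (Fin M) ℂ)
    (au ad : ℂ)
    (hau : au = (Υν.conjTranspose * Υν).trace + 3 * (Υu.conjTranspose * Υu).trace)
    (had : ad = (Υe.conjTranspose * Υe).trace + 3 * (Υd.conjTranspose * Υd).trace)
    (hau0 : au ≠ 0) (had0 : ad ≠ 0)
    (ω11 ω12 ω13 ω23 : ℝ)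
    (hR1ν : ((M : ℂ) / 2) * (ω11 : ℂ) * au = (ω12 : ℂ) * (Υν.conjTranspose * Υν).trace)
    (hR1e : ((M : ℂ) / 2) * (ω11 : ℂ) * ad = (ω12 : ℂ) * (Υe.conjTranspose * Υe).trace)
    (hR1u : ((M : ℂ) / 2) * (ω13 : ℂ) * au = (ω12 : ℂ) * (Υu.conjTranspose * Υu).trace)
    (hR1d : ((M : ℂ) / 2) * (ω13 : ℂ) * ad = (ω12 : ℂ) * (Υd.conjTranspose * Υd).trace)
    (hR2a : (au * ad) • (1 : Matrix (Fin M) (Fin M) ℂ) =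
      ad • (Υν.conjTranspose * Υν).transpose + au • (Υe.conjTranspose * Υe).transpose)
    (hR2b : (ω23 : ℂ) • ((au * ad) • (1 : Matrix (Fin M) (Fin M) ℂ)) =
      (ω12 : ℂ) • (ad • (Υu.conjTranspose * Υu) + au • (Υd.conjTranspose * Υd))) :
    (M : ℝ) * (ω11 + 3 * ω13) = 2 * ω12 ∧
    ω12 * (2 - M) = 3 * M * ω23 ∧
    ω11 = ω12 ∧ ω13 = ω23 := by
  have hM0 : (M : ℂ) ≠ 0 := Nat.cast_ne_zero.mpr (by omega)
  have tA := congrArg Matrix.trace hR2a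
  have tB := congrArg Matrix.trace hR2b
  simp only [Matrix.trace_smul, Matrix.trace_one, Matrix.trace_add, Matrix.trace_transpose,
    Fintype.card_fin, smul_eq_mul] at tA tB
  -- e1 : M * (ω11 + 3 ω13) = 2 ω12  (in ℂ)
  have e1c : ((M : ℂ) * ((ω11 : ℂ) + 3 * ω13)) * au = (2 * (ω12 : ℂ)) * au := by
    linear_combination 2 * hR1ν + 6 * hR1u + (-2 * (ω12 : ℂ)) * hau
  have e1 : (M : ℝ) * (ω11 + 3 * ω13) = 2 * ω12 := by
    have := mul_right_cancel₀ hau0 e1c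
    exact_mod_cast this
  have hMad : (M : ℂ) * au * ad ≠ 0 := by
    simp [hM0, hau0, had0]
  have e3c : (ω11 : ℂ) * ((M : ℂ) * au * ad) = (ω12 : ℂ) * ((M : ℂ) * au * ad) := by
    linear_combination ad * hR1ν + au * hR1e - (ω12 : ℂ) * tA
  have e3 : ω11 = ω12 := by
    have := mul_right_cancel₀ hMad e3c
    exact_mod_cast this
  have e4c : (ω13 : ℂ) * ((M : ℂ) * au * ad) = (ω23 : ℂ) * ((M : ℂ) * au * ad) := by
    linear_combination ad * hR1u + au * hR1d - tB
  have e4 : ω13 = ω23 := by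
    have := mul_right_cancel₀ hMad e4c
    exact_mod_cast this
  refine ⟨e1, ?_, e3, e4⟩
  linear_combination -e1 + (M : ℝ) * e3 + 3 * (M : ℝ) * e4
end

section
/- For no integer M ≥ 1 do there exist M×M complex matrices Υ_ν, Υ_e, Υ_u, Υ_d with a_u ≠ 0 and a_d ≠ 0 such that the relations (R1) and (R2) hold with ω₁₁ = ω₁₂ = ω₁₃ = ω₂₃ = 1/2. (Equivalently: the supersymmetry constraints of the noncommutative MSSM, which require each ω to equal 1/2, would force the number of generations to equal 1/2; hence there is no number of particle generations for which the spectral action of the almost-commutative geometry whose particle content is that of the MSSM is supersymmetric.) -/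
open Matrix

/-- **The spectral action of the noncommutative MSSM is not supersymmetric.**
For no integer `M ≥ 1` do there exist Yukawa matrices `Υν, Υe, Υu, Υd` with
`a_u ≠ 0` and `a_d ≠ 0` satisfying the supersymmetry relations (R1) and (R2) with
`ω₁₁ = ω₁₂ = ω₁₃ = ω₂₃ = 1/2`; equivalently, those constraints would force the
number of generations to equal `1/2`. -/
theorem ncmssm_not_supersymmetric (M : ℕ) (hM : 1 ≤ M) :
    ¬ ∃ (Υν Υe Υu Υd : Matrix (Fin M) (Fin M) ℂ) (au ad : ℂ) (ω11 ω12 ω13 ω23 : ℝ),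
      au = (Υν.conjTranspose * Υν).trace + 3 * (Υu.conjTranspose * Υu).trace ∧
      ad = (Υe.conjTranspose * Υe).trace + 3 * (Υd.conjTranspose * Υd).trace ∧
      au ≠ 0 ∧ ad ≠ 0 ∧
      ω11 = 1 / 2 ∧ ω12 = 1 / 2 ∧ ω13 = 1 / 2 ∧ ω23 = 1 / 2 ∧
      ((M : ℂ) / 2) * (ω11 : ℂ) * au = (ω12 : ℂ) * (Υν.conjTranspose * Υν).trace ∧
      ((M : ℂ) / 2) * (ω11 : ℂ) * ad = (ω12 : ℂ) * (Υe.conjTranspose * Υe).trace ∧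
      ((M : ℂ) / 2) * (ω13 : ℂ) * au = (ω12 : ℂ) * (Υu.conjTranspose * Υu).trace ∧
      ((M : ℂ) / 2) * (ω13 : ℂ) * ad = (ω12 : ℂ) * (Υd.conjTranspose * Υd).trace ∧
      (au * ad) • (1 : Matrix (Fin M) (Fin M) ℂ) =
        ad • (Υν.conjTranspose * Υν).transpose + au • (Υe.conjTranspose * Υe).transpose ∧
      (ω23 : ℂ) • ((au * ad) • (1 : Matrix (Fin M) (Fin M) ℂ)) =
        (ω12 : ℂ) • (ad • (Υu.conjTranspose * Υu) + au • (Υd.conjTranspose * Υd)) := by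
  rintro ⟨Υν, Υe, Υu, Υd, au, ad, ω11, ω12, ω13, ω23, hau, had, hau0, had0,
    h11, h12, h13, h23, e1, e2, e3, e4, r1, r2⟩
  subst h11 h12 h13 h23
  push_cast at e1 e3
  have key : au * (1 - 2 * (M : ℂ)) = 0 := by
    linear_combination hau - 2 * e1 - 6 * e3
  rcases mul_eq_zero.mp key with h | h
  · exact hau0 h
  · have hm : ((1 : ℕ) : ℂ) = ((2 * M : ℕ) : ℂ) := by
      push_cast
      linear_combination h
    have := Nat.cast_injective (R := ℂ) hm
    omega
end
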